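/- Existence of simple proofs: given finite sets of terms T1 ⊆ T2 ⊆ ... ⊆ Tn, if there is a proof of Ti ⊢ u in the Dolev-Yao deduction system, then there is a simple proof of Ti ⊢ u. -/

import Mathlib

open scoped Classical

/-- Terms built from names, variables, pairing, symmetric/asymmetric encryption,
signatures and private keys. -/
inductive Tm where
  | var : ℕ → Tm
  | name : ℕ → Tm
  | pair : Tm → Tm → Tm
  | enc : Tm → Tm → Tm
  | enca : Tm → Tm → Tm
  | sign : Tm → Tm → Tm
  | priv : Tm → Tm
deriving DecidableEq

namespace Tm

/-- The variables of a term. -/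
def vars : Tm → Finset ℕ
  | var x => {x}
  | name _ => ∅
  | pair s t => s.vars ∪ t.vars
  | enc s t => s.vars ∪ t.vars
  | enca s t => s.vars ∪ t.vars
  | sign s t => s.vars ∪ t.vars
  | priv t => t.vars

/-- The subterms of a term. -/
def subterms : Tm → Finset Tm
  | var x => {var x}
  | name a => {name a}
  | pair s t => insert (pair s t) (s.subterms ∪ t.subterms)
  | enc s t => insert (enc s t) (s.subterms ∪ t.subterms)
  | enca s t => insert (enca s t) (s.subterms ∪ t.subterms)
  | sign s t => insert (sign s t) (s.subterms ∪ t.subterms)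
  | priv t => insert (priv t) t.subterms

/-- A term is a variable. -/
def IsVar : Tm → Prop
  | var _ => True
  | _ => False

end Tm

/-- The Dolev-Yao deduction relation `T ⊢ u`. -/
inductive Deduce : Finset Tm → Tm → Prop where
  | ax {T u} : u ∈ T → Deduce T u
  | pairI {T x y} : Deduce T x → Deduce T y → Deduce T (Tm.pair x y)
  | encI {T x y} : Deduce T x → Deduce T y → Deduce T (Tm.enc x y)
  | encaI {T x y} : Deduce T x → Deduce T y → Deduce T (Tm.enca x y)
  | signI {T x y} : Deduce T x → Deduce T y → Deduce T (Tm.sign x y)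
  | encE {T x y} : Deduce T (Tm.enc x y) → Deduce T y → Deduce T x
  | encaE {T x y} : Deduce T (Tm.enca x y) → Deduce T (Tm.priv y) → Deduce T x
  | fstE {T x y} : Deduce T (Tm.pair x y) → Deduce T x
  | sndE {T x y} : Deduce T (Tm.pair x y) → Deduce T y

/-- Substitutions. -/
def Subst := ℕ → Tm

/-- Applying a substitution to a term. -/
def Tm.subst (σ : Subst) : Tm → Tm
  | .var x => σ x
  | .name a => .name a
  | .pair s t => .pair (s.subst σ) (t.subst σ)
  | .enc s t => .enc (s.subst σ) (t.subst σ)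
  | .enca s t => .enca (s.subst σ) (t.subst σ)
  | .sign s t => .sign (s.subst σ) (t.subst σ)
  | .priv t => .priv (t.subst σ)

/-- The identity substitution. -/
def idSubst : Subst := Tm.var

/-- Composition of substitutions: `σ.comp τ` applies `σ` first, then `τ`. -/
def Subst.comp (σ τ : Subst) : Subst := fun x => (σ x).subst τ

/-- The variables of a finite set of terms. -/
def setVars (T : Finset Tm) : Finset ℕ := T.sup Tm.vars

/-- The subterms of a finite set of terms. -/
def stSet (T : Finset Tm) : Finset Tm := T.sup Tm.subterms

/-- A deducibility constraint `T ⊩ u`: a (nonempty) finite set of terms and a term. -/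
abbrev Cst := Finset Tm × Tm

/-- Applying a substitution to a constraint. -/
def conSubst (σ : Subst) (c : Cst) : Cst := (c.1.image (Tm.subst σ), c.2.subst σ)

/-- Applying a substitution to a constraint system. -/
def csSubst (σ : Subst) (S : Finset Cst) : Finset Cst := S.image (conSubst σ)

/-- The variables of a constraint system. -/
def sysVars (C : Finset Cst) : Finset ℕ := C.sup (fun c => setVars c.1 ∪ c.2.vars)

/-- The set `{x | (T' ⊩ x) ∈ S, T' ⊊ T}` of variables (as terms) occurring as
right-hand sides of constraints of `S` whose left-hand side is strictly contained in `T`. -/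
noncomputable def extraVars (S : Finset Cst) (T : Finset Tm) : Finset Tm :=
  (S.filter (fun c => c.1 ⊂ T ∧ c.2.IsVar)).image Prod.snd

/-- `C` is a deducibility constraint system: left-hand sides are nonempty,
totally ordered by inclusion, and every variable of a left-hand side `T` occurs in
the right-hand side of a constraint whose left-hand side is minimal among those whose
right-hand side contains the variable, and strictly included in `T`. -/
def IsCS (C : Finset Cst) : Prop :=
  (∀ c ∈ C, c.1.Nonempty) ∧
  (∀ c ∈ C, ∀ c' ∈ C, c.1 ⊆ c'.1 ∨ c'.1 ⊆ c.1) ∧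
  (∀ c ∈ C, ∀ x ∈ setVars c.1,
    ∃ c' ∈ C, x ∈ c'.2.vars ∧ c'.1 ⊂ c.1 ∧
      ∀ c'' ∈ C, x ∈ c''.2.vars → c'.1 ⊆ c''.1)

/-- A solution of a constraint system: a ground substitution whose domain is `V(C)`
such that `Tθ ⊢ uθ` for every constraint `(T ⊩ u) ∈ C`. -/
def IsSolution (θ : Subst) (C : Finset Cst) : Prop :=
  (∀ x ∈ sysVars C, (θ x).vars = ∅) ∧
  (∀ x, x ∉ sysVars C → θ x = Tm.var x) ∧
  (∀ c ∈ C, Deduce (c.1.image (Tm.subst θ)) (c.2.subst θ))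

/-- A (non-`⊥`) constraint system is solved if all right-hand sides are variables. -/
def Solved (C : Finset Cst) : Prop := ∀ c ∈ C, c.2.IsVar

/-- `σ` is a most general unifier of `t` and `u`. -/
def IsMGU (σ : Subst) (t u : Tm) : Prop :=
  t.subst σ = u.subst σ ∧
  (∀ x, x ∉ t.vars ∪ u.vars → σ x = Tm.var x) ∧
  (∀ x, (σ x).vars ⊆ t.vars ∪ u.vars) ∧
  (∀ δ : Subst, t.subst δ = u.subst δ → ∃ ρ : Subst, ∀ x, δ x = (σ x).subst ρ)

/-- The binary constructors `pair`, `enc`, `enca`, `sign`. -/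
inductive BinOp where
  | pair | enc | enca | sign

def BinOp.app : BinOp → Tm → Tm → Tm
  | .pair => Tm.pair
  | .enc => Tm.enc
  | .enca => Tm.enca
  | .sign => Tm.sign

/-- One step of simplification `C ⇝_σ C'` (result `none` represents `⊥`),
given by the rules R1, R2, R3, R3', R4, Rf. -/
inductive Step : Finset Cst → Subst → Option (Finset Cst) → Prop where
  | r1 {S : Finset Cst} {T : Finset Tm} {u : Tm} :
      (T, u) ∈ S →
      Deduce (T ∪ extraVars (S.erase (T, u)) T) u →
      Step S idSubst (some (S.erase (T, u)))
  | r2 {S : Finset Cst} {T : Finset Tm} {u t : Tm} {σ : Subst} :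
      (T, u) ∈ S → t ∈ stSet T → ¬ t.IsVar → ¬ u.IsVar → t ≠ u →
      IsMGU σ t u →
      Step S σ (some (csSubst σ S))
  | r3 {S : Finset Cst} {T : Finset Tm} {u t₁ t₂ : Tm} {σ : Subst} :
      (T, u) ∈ S → t₁ ∈ stSet T → t₂ ∈ stSet T → ¬ t₁.IsVar → ¬ t₂.IsVar →
      t₁ ≠ t₂ → IsMGU σ t₁ t₂ →
      Step S σ (some (csSubst σ S))
  | r3' {S : Finset Cst} {T : Finset Tm} {u t₁ t₂ t₃ : Tm} {σ : Subst} :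
      (T, u) ∈ S → Tm.enca t₁ t₂ ∈ stSet T → Tm.priv t₃ ∈ stSet T →
      t₂ ≠ t₃ → (t₂.IsVar ∨ t₃.IsVar) → IsMGU σ t₂ t₃ →
      Step S σ (some (csSubst σ S))
  | r4 {S : Finset Cst} {T : Finset Tm} {u : Tm} :
      (T, u) ∈ S → setVars T ∪ u.vars = ∅ → ¬ Deduce T u →
      Step S idSubst none
  | rf {S : Finset Cst} {T : Finset Tm} {u v : Tm} (b : BinOp) :
      (T, b.app u v) ∈ S →
      Step S idSubst (some (insert (T, u) (insert (T, v) (S.erase (T, b.app u v)))))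

/-- Sequences of simplification steps `C ⇝*_σ C'`, composing the substitutions. -/
inductive Steps : Finset Cst → Subst → Option (Finset Cst) → Prop where
  | refl (S) : Steps S idSubst (some S)
  | tail {S : Finset Cst} {σ : Subst} {S' : Finset Cst} {τ : Subst} {R} :
      Steps S σ (some S') → Step S' τ R → Steps S (σ.comp τ) R

/-- A security property, identified with its set of solutions (ground substitutions
making it true); `θ` solves `φσ` iff `σθ` solves `φ`. -/
def SecProp := Subst → Prop

/-- The instance `φσ` of a security property `φ` by a substitution `σ`. -/
def SecProp.subst (φ : SecProp) (σ : Subst) : SecProp := fun θ => φ (σ.comp θ)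

/-- `θ` is an attack for `φ` and `C` if it is a solution of both. -/
def IsAttack (θ : Subst) (C : Finset Cst) (φ : SecProp) : Prop :=
  IsSolution θ C ∧ φ θ

/-- One memorizing simplification step: `C;D ⇒_σ (C' \ D); (D ∪ (C \ C'))`. -/
inductive MStep : Finset Cst × Finset Cst → Subst → Finset Cst × Finset Cst → Prop where
  | mk {C D C' : Finset Cst} {σ : Subst} :
      Step C σ (some C') → MStep (C, D) σ (C' \ D, D ∪ (C \ C'))

/-- Sequences of memorizing simplification steps, composing the substitutions. -/
inductive MSteps : Finset Cst × Finset Cst → Subst → Finset Cst × Finset Cst → Prop where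
  | refl (P) : MSteps P idSubst P
  | tail {P : Finset Cst × Finset Cst} {σ : Subst} {Q : Finset Cst × Finset Cst}
      {τ : Subst} {R : Finset Cst × Finset Cst} :
      MSteps P σ Q → MStep Q τ R → MSteps P (σ.comp τ) R

/-- Proof trees for the Dolev-Yao deduction system (the left-hand side `T` is
the same in all sequents of a proof). -/
inductive PTree (T : Finset Tm) : Tm → Type where
  | ax {u} : u ∈ T → PTree T u
  | pairI {x y} : PTree T x → PTree T y → PTree T (Tm.pair x y)
  | encI {x y} : PTree T x → PTree T y → PTree T (Tm.enc x y)
  | encaI {x y} : PTree T x → PTree T y → PTree T (Tm.enca x y)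
  | signI {x y} : PTree T x → PTree T y → PTree T (Tm.sign x y)
  | encE {x y} : PTree T (Tm.enc x y) → PTree T y → PTree T x
  | encaE {x y} : PTree T (Tm.enca x y) → PTree T (Tm.priv y) → PTree T x
  | fstE {x y} : PTree T (Tm.pair x y) → PTree T x
  | sndE {x y} : PTree T (Tm.pair x y) → PTree T y

/-- The immediate subproof (child) relation on proof trees. -/
inductive Child (T : Finset Tm) : (Σ u : Tm, PTree T u) → (Σ u : Tm, PTree T u) → Prop where
  | pairI₁ {x y} (p : PTree T x) (q : PTree T y) : Child T ⟨x, p⟩ ⟨Tm.pair x y, .pairI p q⟩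
  | pairI₂ {x y} (p : PTree T x) (q : PTree T y) : Child T ⟨y, q⟩ ⟨Tm.pair x y, .pairI p q⟩
  | encI₁ {x y} (p : PTree T x) (q : PTree T y) : Child T ⟨x, p⟩ ⟨Tm.enc x y, .encI p q⟩
  | encI₂ {x y} (p : PTree T x) (q : PTree T y) : Child T ⟨y, q⟩ ⟨Tm.enc x y, .encI p q⟩
  | encaI₁ {x y} (p : PTree T x) (q : PTree T y) : Child T ⟨x, p⟩ ⟨Tm.enca x y, .encaI p q⟩
  | encaI₂ {x y} (p : PTree T x) (q : PTree T y) : Child T ⟨y, q⟩ ⟨Tm.enca x y, .encaI p q⟩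
  | signI₁ {x y} (p : PTree T x) (q : PTree T y) : Child T ⟨x, p⟩ ⟨Tm.sign x y, .signI p q⟩
  | signI₂ {x y} (p : PTree T x) (q : PTree T y) : Child T ⟨y, q⟩ ⟨Tm.sign x y, .signI p q⟩
  | encE₁ {x y} (p : PTree T (Tm.enc x y)) (q : PTree T y) :
      Child T ⟨Tm.enc x y, p⟩ ⟨x, .encE p q⟩
  | encE₂ {x y} (p : PTree T (Tm.enc x y)) (q : PTree T y) :
      Child T ⟨y, q⟩ ⟨x, .encE p q⟩
  | encaE₁ {x y} (p : PTree T (Tm.enca x y)) (q : PTree T (Tm.priv y)) :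
      Child T ⟨Tm.enca x y, p⟩ ⟨x, .encaE p q⟩
  | encaE₂ {x y} (p : PTree T (Tm.enca x y)) (q : PTree T (Tm.priv y)) :
      Child T ⟨Tm.priv y, q⟩ ⟨x, .encaE p q⟩
  | fstE₁ {x y} (p : PTree T (Tm.pair x y)) : Child T ⟨Tm.pair x y, p⟩ ⟨x, .fstE p⟩
  | sndE₁ {x y} (p : PTree T (Tm.pair x y)) : Child T ⟨Tm.pair x y, p⟩ ⟨y, .sndE p⟩

/-- `a` is a subproof of `b`. -/
def Subproof {T : Finset Tm} (a b : Σ u : Tm, PTree T u) : Prop :=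
  Relation.ReflTransGen (Child T) a b

/-- `a` is a strict subproof of `b`. -/
def StrictSubproof {T : Finset Tm} (a b : Σ u : Tm, PTree T u) : Prop :=
  Relation.TransGen (Child T) a b

/-- The set of terms used at axiom leaves of a proof tree. -/
def axLeaves {T : Finset Tm} : ∀ {u : Tm}, PTree T u → Set Tm
  | u, .ax _ => {u}
  | _, .pairI p q => axLeaves p ∪ axLeaves q
  | _, .encI p q => axLeaves p ∪ axLeaves q
  | _, .encaI p q => axLeaves p ∪ axLeaves q
  | _, .signI p q => axLeaves p ∪ axLeaves q
  | _, .encE p q => axLeaves p ∪ axLeaves q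
  | _, .encaE p q => axLeaves p ∪ axLeaves q
  | _, .fstE p => axLeaves p
  | _, .sndE p => axLeaves p

/-- No label (conclusion) is repeated along any branch of `π`. -/
def NoRepeat {T : Finset Tm} {u : Tm} (π : PTree T u) : Prop :=
  ∀ a b : Σ v : Tm, PTree T v, Subproof a ⟨u, π⟩ → StrictSubproof b a → b.1 ≠ a.1

/-- The last rule of a proof tree is a decomposition (symmetric decryption,
asymmetric decryption, or a projection). -/
def lastIsDecomp {T : Finset Tm} : ∀ {u : Tm}, PTree T u → Prop
  | _, .encE _ _ => True
  | _, .encaE _ _ => True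
  | _, .fstE _ => True
  | _, .sndE _ => True
  | _, _ => False

/-- Left minimality of a subproof `a` of a proof over `Tc i`, relative to the
chain `Tc 0 ⊆ ... ⊆ Tc (n-1)`: whenever `Tc j ⊢ concl(a)` is derivable for some
`j < i`, replacing `Tc i` by `Tc j` in all left members still yields a proof,
i.e. all axiom leaves of `a` belong to `Tc j`. -/
def LeftMinimalChain {n : ℕ} (Tc : Fin n → Finset Tm) (i : Fin n)
    (a : Σ v : Tm, PTree (Tc i) v) : Prop :=
  ∀ j : Fin n, j < i → Deduce (Tc j) a.1 → axLeaves a.2 ⊆ ↑(Tc j)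

/-- A proof of `Tc i ⊢ u` is simple (w.r.t. the chain `Tc`) if all its subproofs
are left minimal and no label is repeated on any branch. -/
def SimpleChain {n : ℕ} (Tc : Fin n → Finset Tm) (i : Fin n) {u : Tm}
    (π : PTree (Tc i) u) : Prop :=
  (∀ a : Σ v : Tm, PTree (Tc i) v, Subproof a ⟨u, π⟩ → LeftMinimalChain Tc i a) ∧
    NoRepeat π

/-
Order terms by the lexicographic cost `(j, k)`, where `j` is the first layer `Tc j` from which
the term is deducible and `k` the least size of a proof tree of it over `Tc j`. Rebuild, top down,
each term from the last rule of such a cheapest proof: its premises have strictly smaller cost, so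
labels strictly decrease along every branch (no repetition), and every axiom leaf `w` lies in the
layer of `w`'s cost, which is contained in `Tc j` for every `j` with `Tc j ⊢ w`.
-/

lemma Deduce.nonempty_ptree {T : Finset Tm} {u : Tm} (h : Deduce T u) : Nonempty (PTree T u) := by
  induction h with
  | ax h => exact ⟨.ax h⟩
  | pairI _ _ ihx ihy => obtain ⟨p⟩ := ihx; obtain ⟨q⟩ := ihy; exact ⟨.pairI p q⟩
  | encI _ _ ihx ihy => obtain ⟨p⟩ := ihx; obtain ⟨q⟩ := ihy; exact ⟨.encI p q⟩
  | encaI _ _ ihx ihy => obtain ⟨p⟩ := ihx; obtain ⟨q⟩ := ihy; exact ⟨.encaI p q⟩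
  | signI _ _ ihx ihy => obtain ⟨p⟩ := ihx; obtain ⟨q⟩ := ihy; exact ⟨.signI p q⟩
  | encE _ _ ihx ihy => obtain ⟨p⟩ := ihx; obtain ⟨q⟩ := ihy; exact ⟨.encE p q⟩
  | encaE _ _ ihx ihy => obtain ⟨p⟩ := ihx; obtain ⟨q⟩ := ihy; exact ⟨.encaE p q⟩
  | fstE _ ih => obtain ⟨p⟩ := ih; exact ⟨.fstE p⟩
  | sndE _ ih => obtain ⟨p⟩ := ih; exact ⟨.sndE p⟩

lemma Child.sizeOf_lt {T : Finset Tm} {a b : Σ u : Tm, PTree T u} (h : Child T a b) :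
    sizeOf a.2 < sizeOf b.2 := by
  cases h <;> simp <;> omega

namespace PTree

variable {T : Finset Tm} {α : Type*} [Preorder α] (μ : Tm → α) (S : α → Set Tm)

def Graded : ∀ {u : Tm}, PTree T u → Prop
  | u, .ax _ => u ∈ S (μ u)
  | _, @pairI _ x y p q => μ x < μ (.pair x y) ∧ μ y < μ (.pair x y) ∧ Graded p ∧ Graded q
  | _, @encI _ x y p q => μ x < μ (.enc x y) ∧ μ y < μ (.enc x y) ∧ Graded p ∧ Graded q
  | _, @encaI _ x y p q => μ x < μ (.enca x y) ∧ μ y < μ (.enca x y) ∧ Graded p ∧ Graded q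
  | _, @signI _ x y p q => μ x < μ (.sign x y) ∧ μ y < μ (.sign x y) ∧ Graded p ∧ Graded q
  | _, @encE _ x y p q => μ (.enc x y) < μ x ∧ μ y < μ x ∧ Graded p ∧ Graded q
  | _, @encaE _ x y p q => μ (.enca x y) < μ x ∧ μ (.priv y) < μ x ∧ Graded p ∧ Graded q
  | _, @fstE _ x y p => μ (.pair x y) < μ x ∧ Graded p
  | _, @sndE _ x y p => μ (.pair x y) < μ y ∧ Graded p

variable {μ S}

lemma Graded.of_child {a b : Σ u : Tm, PTree T u} (h : Child T a b) (hb : b.2.Graded μ S) :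
    a.2.Graded μ S ∧ μ a.1 < μ b.1 := by
  cases h <;> simp only [Graded] at hb ⊢ <;> tauto

lemma Graded.of_subproof {a b : Σ u : Tm, PTree T u} (h : Subproof a b)
    (hb : b.2.Graded μ S) : a.2.Graded μ S := by
  induction h using Relation.ReflTransGen.head_induction_on with
  | refl => exact hb
  | head hc _ ih => exact (ih.of_child hc).1

lemma Graded.lt_of_strictSubproof {a b : Σ u : Tm, PTree T u} (h : StrictSubproof a b)
    (hb : b.2.Graded μ S) : μ a.1 < μ b.1 := by
  induction h using Relation.TransGen.head_induction_on with
  | single hc => exact (hb.of_child hc).2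
  | head hc hrest ih =>
    exact ((Graded.of_subproof hrest.to_reflTransGen hb).of_child hc).2.trans ih

lemma Graded.noRepeat {u : Tm} {π : PTree T u} (hπ : π.Graded μ S) : NoRepeat π :=
  fun _ _ ha hb heq => ((hπ.of_subproof ha).lt_of_strictSubproof hb).ne (congrArg μ heq)

lemma Graded.axLeaves_subset (hS : Monotone S) {u : Tm} {π : PTree T u}
    (hπ : π.Graded μ S) : axLeaves π ⊆ S (μ u) := by
  induction π with
  | ax _ => exact Set.singleton_subset_iff.2 hπ
  | pairI _ _ ihp ihq | encI _ _ ihp ihq | encaI _ _ ihp ihq | signI _ _ ihp ihq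
  | encE _ _ ihp ihq | encaE _ _ ihp ihq =>
    exact Set.union_subset ((ihp hπ.2.2.1).trans (hS hπ.1.le))
      ((ihq hπ.2.2.2).trans (hS hπ.2.1.le))
  | fstE _ ih | sndE _ ih => exact (ih hπ.2).trans (hS hπ.1.le)

lemma exists_graded_of_children {T' : Finset Tm} {v : Tm} (π₀ : PTree T' v)
    (hax : v ∈ T' → v ∈ T ∧ v ∈ S (μ v))
    (hch : ∀ w (p : PTree T' w), Child T' ⟨w, p⟩ ⟨v, π₀⟩ →
      μ w < μ v ∧ ∃ π : PTree T w, π.Graded μ S) :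
    ∃ π : PTree T v, π.Graded μ S := by
  cases π₀ with
  | ax h => exact ⟨.ax (hax h).1, (hax h).2⟩
  | pairI p q =>
    obtain ⟨hp, πp, gp⟩ := hch _ p (.pairI₁ p q)
    obtain ⟨hq, πq, gq⟩ := hch _ q (.pairI₂ p q)
    exact ⟨.pairI πp πq, hp, hq, gp, gq⟩
  | encI p q =>
    obtain ⟨hp, πp, gp⟩ := hch _ p (.encI₁ p q)
    obtain ⟨hq, πq, gq⟩ := hch _ q (.encI₂ p q)
    exact ⟨.encI πp πq, hp, hq, gp, gq⟩
  | encaI p q =>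
    obtain ⟨hp, πp, gp⟩ := hch _ p (.encaI₁ p q)
    obtain ⟨hq, πq, gq⟩ := hch _ q (.encaI₂ p q)
    exact ⟨.encaI πp πq, hp, hq, gp, gq⟩
  | signI p q =>
    obtain ⟨hp, πp, gp⟩ := hch _ p (.signI₁ p q)
    obtain ⟨hq, πq, gq⟩ := hch _ q (.signI₂ p q)
    exact ⟨.signI πp πq, hp, hq, gp, gq⟩
  | encE p q =>
    obtain ⟨hp, πp, gp⟩ := hch _ p (.encE₁ p q)
    obtain ⟨hq, πq, gq⟩ := hch _ q (.encE₂ p q)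
    exact ⟨.encE πp πq, hp, hq, gp, gq⟩
  | encaE p q =>
    obtain ⟨hp, πp, gp⟩ := hch _ p (.encaE₁ p q)
    obtain ⟨hq, πq, gq⟩ := hch _ q (.encaE₂ p q)
    exact ⟨.encaE πp πq, hp, hq, gp, gq⟩
  | fstE p =>
    obtain ⟨hp, πp, gp⟩ := hch _ p (.fstE₁ p)
    exact ⟨.fstE πp, hp, gp⟩
  | sndE p =>
    obtain ⟨hp, πp, gp⟩ := hch _ p (.sndE₁ p)
    exact ⟨.sndE πp, hp, gp⟩

end PTree

section Cost

variable {ι : Type*}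

def costLayer (T : ι → Finset Tm) (p : ι ×ₗ ℕ) : Set Tm := T (ofLex p).1

def proofCosts (T : ι → Finset Tm) (v : Tm) : Set (ι ×ₗ ℕ) :=
  {p | ∃ π : PTree (T (ofLex p).1) v, sizeOf π = (ofLex p).2}

variable {T : ι → Finset Tm}

lemma monotone_costLayer [Preorder ι] (hT : Monotone T) : Monotone (costLayer T) :=
  fun _ _ h => Finset.coe_subset.2 (hT (Prod.Lex.monotone_fst_ofLex h))

lemma mem_proofCosts {j : ι} {v : Tm} (π : PTree (T j) v) :
    toLex (j, sizeOf π) ∈ proofCosts T v :=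
  ⟨π, rfl⟩

lemma proofCosts_nonempty {j : ι} {v : Tm} (h : Deduce (T j) v) : (proofCosts T v).Nonempty :=
  let ⟨π⟩ := h.nonempty_ptree
  ⟨_, mem_proofCosts π⟩

variable [LinearOrder ι] [WellFoundedLT ι] [Nonempty ι]

variable (T) in
noncomputable def cost (v : Tm) : ι ×ₗ ℕ :=
  if h : (proofCosts T v).Nonempty then wellFounded_lt.min _ h else Classical.arbitrary _

lemma cost_le {j : ι} {v : Tm} (π : PTree (T j) v) : cost T v ≤ toLex (j, sizeOf π) := by
  rw [cost, dif_pos ⟨_, mem_proofCosts π⟩]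
  exact wellFounded_lt.min_le (mem_proofCosts π)

lemma exists_ptree_of_cost {v : Tm} (hv : (proofCosts T v).Nonempty) :
    ∃ π : PTree (T (ofLex (cost T v)).1) v, sizeOf π = (ofLex (cost T v)).2 := by
  rw [cost, dif_pos hv]
  exact wellFounded_lt.min_mem _ hv

lemma cost_fst_le {j : ι} {v : Tm} (h : Deduce (T j) v) : (ofLex (cost T v)).1 ≤ j :=
  let ⟨π⟩ := h.nonempty_ptree
  Prod.Lex.monotone_fst_ofLex (cost_le π)

lemma cost_lt_of_child {v : Tm} {π : PTree (T (ofLex (cost T v)).1) v}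
    (hπ : sizeOf π = (ofLex (cost T v)).2) {a : Σ u : Tm, PTree (T (ofLex (cost T v)).1) u}
    (h : Child _ a ⟨v, π⟩) : cost T a.1 < cost T v :=
  (cost_le a.2).trans_lt <| Prod.Lex.toLex_lt_toLex.2 <| .inr ⟨rfl, hπ ▸ h.sizeOf_lt⟩

theorem exists_graded_ptree (hT : Monotone T) {i : ι} {u : Tm} (hu : Deduce (T i) u) :
    ∃ π : PTree (T i) u, π.Graded (cost T) (costLayer T) := by
  suffices ∀ v, (proofCosts T v).Nonempty → (ofLex (cost T v)).1 ≤ i →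
      ∃ π : PTree (T i) v, π.Graded (cost T) (costLayer T) from
    this u (proofCosts_nonempty hu) (cost_fst_le hu)
  intro v
  induction v using (InvImage.wf (cost T) wellFounded_lt).induction with
  | _ v ih =>
  intro hv hvi
  obtain ⟨π₀, hπ₀⟩ := exists_ptree_of_cost hv
  refine PTree.exists_graded_of_children π₀ (fun h => ⟨hT hvi h, h⟩) fun w p hp => ?_
  have hlt := cost_lt_of_child hπ₀ hp
  exact ⟨hlt, ih w hlt ⟨_, mem_proofCosts p⟩
    ((Prod.Lex.monotone_fst_ofLex hlt.le).trans hvi)⟩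

end Cost

/-- given finite sets of terms `Tc 0 ⊆ ... ⊆ Tc (n-1)`, if there is a
proof of `Tc i ⊢ u` then there is a simple proof of it. -/
theorem exists_simple_proof {n : ℕ} (Tc : Fin n → Finset Tm)
    (hmono : ∀ i j : Fin n, i ≤ j → Tc i ⊆ Tc j) (i : Fin n) (u : Tm)
    (h : Deduce (Tc i) u) :
    ∃ π : PTree (Tc i) u, SimpleChain Tc i π := by
  have : Nonempty (Fin n) := ⟨i⟩
  have hT : Monotone Tc := fun j k hjk => hmono j k hjk
  obtain ⟨π, hπ⟩ := exists_graded_ptree hT h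
  refine ⟨π, fun a ha j _ hj => ?_, hπ.noRepeat⟩
  exact ((hπ.of_subproof ha).axLeaves_subset (monotone_costLayer hT)).trans
    (Finset.coe_subset.2 (hT (cost_fst_le hj)))
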